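/- Counimodular case: if ε ∘ σ = ε (i.e. the modular element of the dual is trivial), then σ = S², that is, φ(ab) = φ(b·S²(a)) for all a, b ∈ A. -/

import Mathlib

/-!
Left invariance of `φ` upgrades to strong invariance `Σ a₍₁₎ φ(b a₍₂₎) = S(Σ b₍₁₎ φ(b₍₂₎ a))`.
Slicing `Δ(σ c)` and `(S² ⊗ σ)(Δ c)` with the functionals `φ(a ·)` and using strong invariance
twice, together with the modular property, shows that the two tensors have the same slices; as
these functionals separate points (faithfulness of `φ`), `Δ ∘ σ = (S² ⊗ σ) ∘ Δ`. Applying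
`id ⊗ ε` and `ε ∘ σ = ε` then gives `σ = S²`.
-/

open TensorProduct HopfAlgebra

namespace TensorProduct

section Module

variable {R M N P : Type*} [CommSemiring R] [AddCommMonoid M] [Module R M]
  [AddCommMonoid N] [Module R N] [AddCommMonoid P] [Module R P]

/-- The slice map `id ⊗ f`. -/
def sliceRight (f : M →ₗ[R] R) : N ⊗[R] M →ₗ[R] N :=
  (TensorProduct.rid R N).toLinearMap ∘ₗ f.lTensor N

@[simp]
theorem sliceRight_tmul (f : M →ₗ[R] R) (n : N) (m : M) :
    sliceRight f (n ⊗ₜ[R] m) = f m • n := rfl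

theorem sliceRight_map (f : M →ₗ[R] R) (g : P →ₗ[R] N) (h : M →ₗ[R] M) (u : P ⊗[R] M) :
    sliceRight f (map g h u) = g (sliceRight (f ∘ₗ h) u) := by
  induction u using TensorProduct.induction_on with
  | zero => simp
  | tmul x y => simp
  | add u v hu hv => simp [hu, hv]

theorem eq_zero_of_forall_sliceRight_eq_zero [Module.Free R N] {ι : Type*}
    (f : ι → M →ₗ[R] R) (hf : ∀ m, (∀ i, f i m = 0) → m = 0) (t : N ⊗[R] M)
    (ht : ∀ i, sliceRight (f i) t = 0) : t = 0 := by
  classical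
  let ℬ := Module.Free.chooseBasis R N
  let e := equivFinsuppOfBasisLeft (M := N) (N := M) ℬ
  have coord_sliceRight (u : N ⊗[R] M) (i j) :
      f i (e u j) = ℬ.coord j (sliceRight (f i) u) := by
    induction u using TensorProduct.induction_on with
    | zero => simp
    | tmul n m => simp [e, mul_comm]
    | add u v hu hv => simp_all
  refine e.map_eq_zero_iff.mp (Finsupp.ext fun j ↦ hf _ fun i ↦ ?_)
  rw [coord_sliceRight, ht, map_zero]

end Module

section Algebra

variable {R A B : Type*} [CommSemiring R] [Semiring A] [Algebra R A] [Semiring B] [Algebra R B]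

theorem sliceRight_tmul_one_mul (f : B →ₗ[R] R) (a : A) (w : A ⊗[R] B) :
    sliceRight f ((a ⊗ₜ[R] (1 : B)) * w) = a * sliceRight f w := by
  induction w using TensorProduct.induction_on with
  | zero => simp
  | tmul x y => simp [Algebra.TensorProduct.tmul_mul_tmul]
  | add u v hu hv => simp_all [mul_add]

theorem sliceRight_one_tmul_mul (f : B →ₗ[R] R) (b : B) (w : A ⊗[R] B) :
    sliceRight f (((1 : A) ⊗ₜ[R] b) * w) = sliceRight (f ∘ₗ LinearMap.mulLeft R b) w := by
  induction w using TensorProduct.induction_on with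
  | zero => simp
  | tmul x y => simp [Algebra.TensorProduct.tmul_mul_tmul]
  | add u v hu hv => simp_all [mul_add]

end Algebra

end TensorProduct

namespace Coalgebra

variable {R A : Type*} [CommSemiring R] [AddCommMonoid A] [Module R A] [Coalgebra R A]

@[simp]
theorem sliceRight_counit_comul (a : A) : sliceRight (counit (R := R)) (comul a) = a := by
  simp [sliceRight]

theorem eq_of_comul_apply_eq_map (g σ : A →ₗ[R] A)
    (hcomul : ∀ a, comul (R := R) (σ a) = map g σ (comul a))
    (hcounit : ∀ a, counit (R := R) (σ a) = counit a) (a : A) : σ a = g a := by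
  have hσ : counit ∘ₗ σ = counit (R := R) := LinearMap.ext hcounit
  calc σ a = sliceRight counit (comul (R := R) (σ a)) := (sliceRight_counit_comul _).symm
    _ = g a := by rw [hcomul, sliceRight_map, hσ, sliceRight_counit_comul]

end Coalgebra

namespace HopfAlgebra

open Coalgebra

section Semiring

variable {R A : Type*} [CommSemiring R] [Semiring A] [HopfAlgebra R A]

theorem sum_antipode_tmul_one_mul_comul {ι : Type*} {b : A} (𝓡 : Repr R b ι) :
    ∑ i ∈ 𝓡.index, (antipode R (𝓡.left i) ⊗ₜ[R] (1 : A)) * comul (𝓡.right i) =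
      1 ⊗ₜ[R] b := by
  let U : A ⊗[R] (A ⊗[R] A) →ₗ[R] A ⊗[R] A :=
    LinearMap.mul' R (A ⊗[R] A) ∘ₗ
      (Algebra.TensorProduct.includeLeft.toLinearMap ∘ₗ antipode R).rTensor (A ⊗[R] A)
  have hU : U ∘ₗ (TensorProduct.assoc R A A A).toLinearMap =
      (LinearMap.mul' R A ∘ₗ (antipode R).rTensor A).rTensor A := by
    apply TensorProduct.ext_threefold
    intro x y z
    simp [U]
  calc ∑ i ∈ 𝓡.index, (antipode R (𝓡.left i) ⊗ₜ[R] (1 : A)) * comul (𝓡.right i)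
      = U (comul.lTensor A (comul b)) := by simp [U, ← 𝓡.eq, map_sum]
    _ = U (TensorProduct.assoc R A A A (comul.rTensor A (comul b))) := by rw [coassoc_apply]
    _ = (LinearMap.mul' R A ∘ₗ (antipode R).rTensor A ∘ₗ comul).rTensor A (comul b) := by
      rw [← LinearMap.comp_assoc, LinearMap.rTensor_comp_apply, ← hU]
      rfl
    _ = 1 ⊗ₜ[R] b := by
      rw [mul_antipode_rTensor_comul, LinearMap.rTensor_comp_apply, rTensor_counit_comul]
      simp

def IsLeftIntegral (φ : A →ₗ[R] R) : Prop :=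
  ∀ a : A, sliceRight φ (comul a) = φ a • (1 : A)

theorem IsLeftIntegral.sliceRight_mulLeft_comul {φ : A →ₗ[R] R} (hφ : IsLeftIntegral φ)
    (a b : A) :
    sliceRight (φ ∘ₗ LinearMap.mulLeft R b) (comul a) =
      antipode R (sliceRight (φ ∘ₗ LinearMap.mulRight R a) (comul b)) := by
  let P : A ⊗[R] A →ₗ[R] A := sliceRight φ ∘ₗ LinearMap.mulRight R (comul a)
  have hP_comul (x : A) : P (comul x) = φ (x * a) • 1 := by
    simp only [P, LinearMap.comp_apply, LinearMap.mulRight_apply, ← Bialgebra.comul_mul]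
    exact hφ _
  let 𝓡 := ℛ R b
  calc sliceRight (φ ∘ₗ LinearMap.mulLeft R b) (comul a) = P (1 ⊗ₜ b) := by
        simp [P, sliceRight_one_tmul_mul]
    _ = P (∑ i ∈ 𝓡.index, (antipode R (𝓡.left i) ⊗ₜ[R] (1 : A)) * comul (𝓡.right i)) := by
        rw [sum_antipode_tmul_one_mul_comul]
    _ = ∑ i ∈ 𝓡.index, antipode R (𝓡.left i) * (φ (𝓡.right i * a) • 1) := by
        simp only [map_sum, ← hP_comul]
        simp [P, mul_assoc, sliceRight_tmul_one_mul]
    _ = antipode R (sliceRight (φ ∘ₗ LinearMap.mulRight R a) (comul b)) := by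
        simp [← 𝓡.eq, map_sum]

end Semiring

variable {R A : Type*} [CommRing R] [Ring A] [HopfAlgebra R A] [Module.Free R A]

theorem IsLeftIntegral.comul_modular {φ : A →ₗ[R] R} (hφ : IsLeftIntegral φ)
    (hφ_faithful : ∀ a : A, (∀ b : A, φ (b * a) = 0) → a = 0)
    (σ : A →ₗ[R] A) (hσ : ∀ a b : A, φ (a * b) = φ (b * σ a)) (c : A) :
    comul (R := R) (σ c) = map (antipode R ∘ₗ antipode R) σ (comul c) := by
  have hσ_mulRight (x : A) : φ ∘ₗ LinearMap.mulRight R (σ x) = φ ∘ₗ LinearMap.mulLeft R x :=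
    LinearMap.ext fun y ↦ (hσ x y).symm
  have hσ_mulLeft (x : A) : φ ∘ₗ LinearMap.mulLeft R x ∘ₗ σ = φ ∘ₗ LinearMap.mulRight R x :=
    LinearMap.ext fun y ↦ (hσ y x).symm
  rw [← sub_eq_zero]
  refine eq_zero_of_forall_sliceRight_eq_zero (fun b ↦ φ ∘ₗ LinearMap.mulLeft R b)
    hφ_faithful _ fun a ↦ ?_
  rw [map_sub, sub_eq_zero]
  calc sliceRight (φ ∘ₗ LinearMap.mulLeft R a) (comul (σ c))
      = antipode R (sliceRight (φ ∘ₗ LinearMap.mulLeft R c) (comul a)) := by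
        rw [hφ.sliceRight_mulLeft_comul, hσ_mulRight]
    _ = antipode R (antipode R (sliceRight (φ ∘ₗ LinearMap.mulRight R a) (comul c))) := by
        rw [hφ.sliceRight_mulLeft_comul]
    _ = sliceRight (φ ∘ₗ LinearMap.mulLeft R a) (map (antipode R ∘ₗ antipode R) σ (comul c)) := by
        rw [sliceRight_map, LinearMap.comp_assoc, hσ_mulLeft]
        rfl

end HopfAlgebra

theorem counimodular_sigma_eq_antipode_sq_general
    {A : Type*} [Ring A] [HopfAlgebra ℂ A]
    (φ : A →ₗ[ℂ] ℂ)
    (hφL : ∀ a : A,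
      (TensorProduct.rid ℂ A) (LinearMap.lTensor A φ (Coalgebra.comul a)) = φ a • (1 : A))
    (hφf2 : ∀ a : A, (∀ b : A, φ (b * a) = 0) → a = 0)
    (σ : A ≃ₐ[ℂ] A) (hσ : ∀ a b : A, φ (a * b) = φ (b * σ a))
    (hcounimod : ∀ a : A, Coalgebra.counit (R := ℂ) (σ a) = Coalgebra.counit (R := ℂ) a) :
    ∀ a b : A, φ (a * b) = φ (b * antipode (R := ℂ) (antipode (R := ℂ) a)) := by
  intro a b
  have hcomul := IsLeftIntegral.comul_modular hφL hφf2 σ.toLinearMap hσ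
  rw [hσ]
  exact congrArg (fun x ↦ φ (b * x))
    (Coalgebra.eq_of_comul_apply_eq_map _ σ.toLinearMap hcomul hcounimod a)

/-- Counimodular case: if `ε ∘ σ = ε` then `σ = S²`, i.e.
`φ(ab) = φ(b S²(a))` for all `a, b ∈ A`. -/
theorem counimodular_sigma_eq_antipode_sq
    {A : Type*} [Ring A] [HopfAlgebra ℂ A]
    (hS : Function.Bijective (antipode (R := ℂ) (A := A)))
    (φ : A →ₗ[ℂ] ℂ) (hφ0 : φ ≠ 0)
    (hφL : ∀ a : A,
      (TensorProduct.rid ℂ A) (LinearMap.lTensor A φ (Coalgebra.comul a)) = φ a • (1 : A))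
    (hφf1 : ∀ a : A, (∀ b : A, φ (a * b) = 0) → a = 0)
    (hφf2 : ∀ a : A, (∀ b : A, φ (b * a) = 0) → a = 0)
    (σ : A ≃ₐ[ℂ] A) (hσ : ∀ a b : A, φ (a * b) = φ (b * σ a))
    (hcounimod : ∀ a : A, Coalgebra.counit (R := ℂ) (σ a) = Coalgebra.counit (R := ℂ) a) :
    ∀ a b : A, φ (a * b) = φ (b * antipode (R := ℂ) (antipode (R := ℂ) a)) :=
  counimodular_sigma_eq_antipode_sq_general φ hφL hφf2 σ hσ hcounimod
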